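/- arXiv:0807.2155 — 2 statements merged into one kernel-verified Lean document; each statement's English description precedes it below -/
import Mathlib

section
/- Fix a real number q with 0 < q < 1. For all X, Λ ∈ ℂ with X ≠ 0 and Λ ≠ 0, the global q-Whittaker function Ψ̃ of type A₁ satisfies the q-Toda difference equation q^{1/4} · ( X · Ψ̃(q^{1/2}X, Λ) + X^{−1} · ( Ψ̃(q^{−1/2}X, Λ) − Ψ̃(q^{1/2}X, Λ) ) ) = (Λ + Λ^{−1}) · Ψ̃(X, Λ). (Equation (4.29) of the paper, Theorem 3.2(ii) in the rank-one case.) -/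
open scoped BigOperators
open Filter

noncomputable section

/-- Symmetric monomial `M_r(X) = X^r + X^{-r}` for `r ≥ 1`, `M_0 = 1`. -/
def Msym (r : ℕ) (X : ℂ) : ℂ := if r = 0 then 1 else X ^ r + X⁻¹ ^ r

/-- Continuous q-Hermite Laurent polynomial (Macdonald polynomial of type A₁ at t = 0). -/
def PbarA1 (q : ℝ) (n : ℕ) (X : ℂ) : ℂ :=
  Msym n X + ∑ j ∈ Finset.Icc 1 (n / 2),
    (∏ i ∈ Finset.range j, (1 - (q : ℂ) ^ (n - i)) / (1 - (q : ℂ) ^ (i + 1))) *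
      Msym (n - 2 * j) X

/-- Global q-Whittaker function of type A₁. -/
def whitA1 (q : ℝ) (X Λ : ℂ) : ℂ :=
  ∑' n : ℕ, ((q ^ ((n : ℝ) ^ 2 / 4) : ℝ) : ℂ) * X ^ n * PbarA1 q n Λ /
    ∏ j ∈ Finset.Icc 1 n, (1 - (q : ℂ) ^ j)

/-- Theta function `θ(Λ) = ∑_{j ∈ ℤ} q^{j²/4} Λ^j`. -/
def thetaA1 (q : ℝ) (Λ : ℂ) : ℂ :=
  ∑' j : ℤ, ((q ^ ((j : ℝ) ^ 2 / 4) : ℝ) : ℂ) * Λ ^ j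

/-- Rogers Laurent polynomial (symmetric Macdonald polynomial of type A₁). -/
def RogersA1 (q : ℝ) (t : ℂ) (n : ℕ) (X : ℂ) : ℂ :=
  Msym n X + ∑ j ∈ Finset.Icc 1 (n / 2),
    (∏ i ∈ Finset.range j,
      ((1 - (q : ℂ) ^ (n - i)) * (1 - t * (q : ℂ) ^ i)) /
      ((1 - (q : ℂ) ^ (1 + i)) * (1 - t * (q : ℂ) ^ (n - i - 1)))) *
    Msym (n - 2 * j) X

/-- Global q,t-spherical function of type A₁, with `t = s²`. -/
def sphA1 (q s : ℝ) (X Λ : ℂ) : ℂ :=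
  ∑' n : ℕ, (s : ℂ) ^ n * ((q ^ ((n : ℝ) ^ 2 / 4) : ℝ) : ℂ) *
    RogersA1 q ((s : ℂ) ^ 2) n X * RogersA1 q ((s : ℂ) ^ 2) n Λ *
    ∏ i ∈ Finset.range n,
      ((1 - (s : ℂ) ^ 2 * (q : ℂ) ^ i) * (1 - (s : ℂ) ^ 2 * (q : ℂ) ^ (i + 1))) /
      ((1 - ((s : ℂ) ^ 2) ^ 2 * (q : ℂ) ^ i) * (1 - (q : ℂ) ^ (i + 1)))

/-- Macdonald truncated theta weight function of type A₁. -/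
def muA1 (q : ℝ) (t : ℂ) (X : ℂ) : ℂ :=
  ∏' j : ℕ, ((1 - X ^ 2 * (q : ℂ) ^ j) * (1 - X⁻¹ ^ 2 * (q : ℂ) ^ (j + 1))) /
    ((1 - t * X ^ 2 * (q : ℂ) ^ j) * (1 - t * X⁻¹ ^ 2 * (q : ℂ) ^ (j + 1)))

/-!
Writing `P̄ₙ(Λ) = Λⁿ hₙ(Λ⁻²)` with `hₙ` the Rogers–Szegő polynomial, the q-Pascal rule for the
Gaussian binomial coefficients becomes the three-term recurrence
`(Λ + Λ⁻¹) P̄ₙ₊₁ = P̄ₙ₊₂ + (1 - qⁿ⁺¹) P̄ₙ`. The q-Toda operator sends the `n`-th term of `Ψ̃`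
to multiples of `Xⁿ⁺¹` and `Xⁿ⁻¹`, and the weights `q^{n²/4} / (q;q)ₙ` are precisely those for which
comparing coefficients of `Xⁿ⁺¹` reduces the equation to this recurrence. The Gaussian factor
`q^{n²/4}` makes all the series absolutely convergent, so the comparison may be done termwise.
-/

open Finset Topology

section QBinom

variable {K : Type*} [Field K] (q : K)

def qPoch (n : ℕ) : K := ∏ i ∈ range n, (1 - q ^ (i + 1))

def qBinom (n j : ℕ) : K := ∏ i ∈ range j, (1 - q ^ (n - i)) / (1 - q ^ (i + 1))

def rogersSzego (n : ℕ) (y : K) : K := ∑ j ∈ range (n + 1), qBinom q n j * y ^ j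

lemma qPoch_succ (n : ℕ) : qPoch q (n + 1) = qPoch q n * (1 - q ^ (n + 1)) :=
  prod_range_succ _ _

lemma qBinom_zero_right (n : ℕ) : qBinom q n 0 = 1 := prod_range_zero _

lemma qBinom_succ_right (n j : ℕ) :
    qBinom q n (j + 1) = qBinom q n j * ((1 - q ^ (n - j)) / (1 - q ^ (j + 1))) :=
  prod_range_succ _ _

lemma qBinom_eq_zero_of_lt {n j : ℕ} (h : n < j) : qBinom q n j = 0 :=
  prod_eq_zero (mem_range.2 h) (by simp)

lemma qBinom_eq_div (n j : ℕ) :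
    qBinom q n j = (∏ i ∈ range j, (1 - q ^ (n - i))) / qPoch q j :=
  prod_div_distrib _ _

lemma prod_one_sub_pow_mul_qPoch {n j : ℕ} (h : j ≤ n) :
    (∏ i ∈ range j, (1 - q ^ (n - i))) * qPoch q (n - j) = qPoch q n := by
  induction j with
  | zero => simp
  | succ j ih =>
    rw [← ih (by omega), prod_range_succ, show n - j = n - (j + 1) + 1 by omega, qPoch_succ]
    ring

lemma rogersSzego_eq_sum_range {n N : ℕ} (h : n < N) (y : K) :
    rogersSzego q n y = ∑ j ∈ range N, qBinom q n j * y ^ j := by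
  refine sum_subset (range_subset_range.2 (by omega)) fun j _ hj => ?_
  rw [qBinom_eq_zero_of_lt q (by simpa using hj), zero_mul]

lemma prod_Icc_one_sub_pow_eq_qPoch (n : ℕ) : ∏ j ∈ Icc 1 n, (1 - q ^ j) = qPoch q n := by
  induction n with
  | zero => simp [qPoch]
  | succ n ih => rw [prod_Icc_succ_top (by omega), ih, qPoch_succ]

variable {q} (hq : ∀ k : ℕ, q ^ (k + 1) ≠ 1)
include hq

lemma one_sub_pow_succ_ne_zero (k : ℕ) : 1 - q ^ (k + 1) ≠ 0 :=
  sub_ne_zero.2 (hq k).symm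

lemma qPoch_ne_zero (n : ℕ) : qPoch q n ≠ 0 :=
  prod_ne_zero_iff.2 fun i _ => one_sub_pow_succ_ne_zero hq i

lemma qBinom_mul_qPoch_mul_qPoch {n j : ℕ} (h : j ≤ n) :
    qBinom q n j * qPoch q j * qPoch q (n - j) = qPoch q n := by
  rw [qBinom_eq_div, div_mul_cancel₀ _ (qPoch_ne_zero hq j), prod_one_sub_pow_mul_qPoch q h]

lemma qBinom_symm {n j : ℕ} (h : j ≤ n) : qBinom q n (n - j) = qBinom q n j := by
  have h₁ := qBinom_mul_qPoch_mul_qPoch hq h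
  have h₂ := qBinom_mul_qPoch_mul_qPoch hq (Nat.sub_le n j)
  rw [Nat.sub_sub_self h] at h₂
  have := mul_ne_zero (qPoch_ne_zero hq j) (qPoch_ne_zero hq (n - j))
  apply mul_right_cancel₀ this
  linear_combination h₂ - h₁

lemma qBinom_succ_succ_mul (n j : ℕ) :
    qBinom q (n + 1) (j + 1) * (1 - q ^ (j + 1)) = (1 - q ^ (n + 1)) * qBinom q n j := by
  have hnum : ∏ i ∈ range (j + 1), (1 - q ^ (n + 1 - i))
      = (∏ i ∈ range j, (1 - q ^ (n - i))) * (1 - q ^ (n + 1)) := by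
    rw [prod_range_succ']
    simp only [Nat.add_sub_add_right, Nat.sub_zero]
  rw [qBinom_eq_div, qBinom_eq_div, hnum, qPoch_succ]
  field_simp [qPoch_ne_zero hq j, one_sub_pow_succ_ne_zero hq j]

lemma qBinom_succ_succ (n j : ℕ) :
    qBinom q (n + 1) (j + 1) = qBinom q n j + q ^ (j + 1) * qBinom q n (j + 1) := by
  have hpow : q ^ (j + 1) * (1 - q ^ (n - j)) * qBinom q n j
      = (q ^ (j + 1) - q ^ (n + 1)) * qBinom q n j := by
    rcases le_or_gt j n with h | h
    · rw [mul_one_sub, ← pow_add, show j + 1 + (n - j) = n + 1 by omega]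
    · simp [qBinom_eq_zero_of_lt q h]
  apply mul_right_cancel₀ (one_sub_pow_succ_ne_zero hq j)
  rw [qBinom_succ_succ_mul hq, qBinom_succ_right]
  field_simp [one_sub_pow_succ_ne_zero hq j]
  linear_combination -hpow

lemma rogersSzego_succ_succ (n : ℕ) (y : K) :
    rogersSzego q (n + 2) y
      = (1 + y) * rogersSzego q (n + 1) y - (1 - q ^ (n + 1)) * y * rogersSzego q n y := by
  have hkey : ∀ j, qBinom q (n + 2) (j + 1) * y ^ (j + 1) = qBinom q (n + 1) (j + 1) * y ^ (j + 1)
      + y * (qBinom q (n + 1) j * y ^ j) - (1 - q ^ (n + 1)) * y * (qBinom q n j * y ^ j) := by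
    intro j
    linear_combination y ^ (j + 1) * (qBinom_succ_succ hq (n + 1) j
      - qBinom_succ_succ_mul hq n j)
  have h₂ : rogersSzego q (n + 2) y
      = 1 + ∑ j ∈ range (n + 2), qBinom q (n + 2) (j + 1) * y ^ (j + 1) := by
    rw [rogersSzego, sum_range_succ', qBinom_zero_right, pow_zero, mul_one, add_comm]
  have h₁ : rogersSzego q (n + 1) y
      = 1 + ∑ j ∈ range (n + 2), qBinom q (n + 1) (j + 1) * y ^ (j + 1) := by
    rw [rogersSzego_eq_sum_range q (by omega : n + 1 < n + 3), sum_range_succ',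
      qBinom_zero_right, pow_zero, mul_one, add_comm]
  rw [h₂, add_mul, one_mul, rogersSzego_eq_sum_range q (by omega : n < n + 2)]
  nth_rw 1 [h₁]
  unfold rogersSzego
  simp only [hkey, sum_add_distrib, sum_sub_distrib, mul_sum]
  ring

end QBinom

lemma Finset.sum_range_succ_eq_sum_range_div_two_succ {M : Type*} [AddCommMonoid M]
    (f : ℕ → M) (n : ℕ) :
    ∑ j ∈ range (n + 1), f j
      = ∑ j ∈ range (n / 2 + 1), if 2 * j = n then f j else f j + f (n - j) := by
  induction n using Nat.twoStepInduction generalizing f with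
  | zero => simp
  | one => simp [sum_range_succ]
  | more n ih _ =>
    rw [sum_range_succ', sum_range_succ, ih fun j => f (j + 1),
      show (n + 2) / 2 + 1 = n / 2 + 1 + 1 by omega,
      sum_range_succ' (fun j => if 2 * j = n + 2 then f j else f j + f (n + 2 - j)),
      if_neg (by omega), Nat.sub_zero, add_assoc, add_comm (f _)]
    congr 1
    refine sum_congr rfl fun j hj => ?_
    replace hj : j ≤ n := by have := mem_range.1 hj; omega
    simp only [show n + 2 - (j + 1) = n - j + 1 by omega,
      show 2 * (j + 1) = n + 2 ↔ 2 * j = n by omega]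

lemma summable_pow_mul_rpow_sq_div_four {q : ℝ} (hq0 : 0 ≤ q) (hq1 : q < 1) (C : ℝ) :
    Summable fun n : ℕ => C ^ n * q ^ ((n : ℝ) ^ 2 / 4) := by
  set r := q ^ (1 / 4 : ℝ)
  have hterm : ∀ n : ℕ, C ^ n * q ^ ((n : ℝ) ^ 2 / 4) = (C * r ^ n) ^ n := fun n => by
    rw [mul_pow, ← pow_mul, ← Real.rpow_mul_natCast hq0]
    congr 2
    push_cast
    ring
  have hlim : Tendsto (fun n : ℕ => C * r ^ n) atTop (𝓝 0) := by
    simpa using (tendsto_pow_atTop_nhds_zero_of_lt_one (Real.rpow_nonneg hq0 _)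
      (Real.rpow_lt_one hq0 hq1 (by norm_num))).const_mul C
  have hsmall : ∀ᶠ n : ℕ in atTop, ‖C * r ^ n‖ ≤ 1 / 2 :=
    hlim.norm.eventually (ge_mem_nhds (by norm_num))
  simp_rw [hterm]
  refine .of_norm_bounded_eventually_nat summable_geometric_two ?_
  filter_upwards [hsmall] with n hn
  rw [norm_pow]
  exact pow_le_pow_left₀ (norm_nonneg _) hn n

lemma hasSum_of_eq_shift_add {G : Type*} [AddCommGroup G] [TopologicalSpace G]
    [IsTopologicalAddGroup G] {b u v : ℕ → G} {a c : G} (hu : HasSum u a) (hv : HasSum v c)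
    (hu0 : u 0 = 0) (hb0 : b 0 = u 1) (hb : ∀ n, b (n + 1) = u (n + 2) + v n) :
    HasSum b (a + c) := by
  have hu2 : HasSum (fun n => u (n + 2)) (a - u 1) := by
    simpa [sum_range_succ, hu0] using (hasSum_nat_add_iff' 2).2 hu
  rw [← hasSum_nat_add_iff' 1]
  simpa [hb, hb0, sub_add_eq_add_sub] using hu2.add hv

lemma rpow_mul_rpow_pow_mul_rpow {q : ℝ} (hq : 0 < q) (a b c : ℝ) (k : ℕ) :
    q ^ a * (q ^ b) ^ k * q ^ c = q ^ (a + b * k + c) := by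
  rw [← Real.rpow_mul_natCast hq.le, ← Real.rpow_add hq, ← Real.rpow_add hq]

section Bounds

variable {q : ℝ} (hq0 : 0 < q) (hq1 : q < 1)
include hq0 hq1

lemma pow_succ_ne_one_of_lt_one (k : ℕ) : q ^ (k + 1) ≠ 1 :=
  (pow_lt_one₀ hq0.le hq1 (Nat.succ_ne_zero k)).ne

lemma ofReal_pow_succ_ne_one_of_lt_one (k : ℕ) : (q : ℂ) ^ (k + 1) ≠ 1 := by
  exact_mod_cast pow_succ_ne_one_of_lt_one hq0 hq1 k

lemma one_sub_le_one_sub_pow_succ (k : ℕ) : 1 - q ≤ 1 - q ^ (k + 1) := by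
  have := pow_le_pow_of_le_one hq0.le hq1.le (Nat.le_add_left 1 k)
  rw [pow_one] at this
  linarith

lemma one_sub_pow_mul_qPoch_le (n : ℕ) : (1 - q) ^ n ≤ qPoch q n := by
  calc (1 - q) ^ n = ∏ _k ∈ range n, (1 - q) := by rw [prod_const, card_range]
    _ ≤ qPoch q n :=
      prod_le_prod (fun _ _ => by linarith) fun k _ => one_sub_le_one_sub_pow_succ hq0 hq1 k

lemma norm_qBinom_le (n j : ℕ) : ‖qBinom (q : ℂ) n j‖ ≤ (1 - q)⁻¹ ^ j := by
  rw [qBinom, norm_prod]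
  refine (prod_le_prod (g := fun _ => (1 - q)⁻¹) (fun _ _ => norm_nonneg _) fun i _ => ?_).trans_eq
    (by rw [prod_const, card_range])
  have hnum : ‖1 - (q : ℂ) ^ (n - i)‖ ≤ 1 := by
    rw [← Complex.ofReal_one, ← Complex.ofReal_pow, ← Complex.ofReal_sub, Complex.norm_real,
      Real.norm_of_nonneg (sub_nonneg.2 (pow_le_one₀ hq0.le hq1.le))]
    linarith [pow_nonneg hq0.le (n - i)]
  have hden : 1 - q ≤ ‖1 - (q : ℂ) ^ (i + 1)‖ := by
    rw [← Complex.ofReal_one, ← Complex.ofReal_pow, ← Complex.ofReal_sub, Complex.norm_real]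
    exact (one_sub_le_one_sub_pow_succ hq0 hq1 i).trans (le_abs_self _)
  rw [norm_div, ← one_div]
  exact div_le_div₀ zero_le_one hnum (by linarith) hden

end Bounds

lemma norm_Msym_le (r : ℕ) (Λ : ℂ) : ‖Msym r Λ‖ ≤ (‖Λ‖ + ‖Λ⁻¹‖ + 1) ^ r := by
  rcases Nat.eq_zero_or_pos r with rfl | hr
  · simp [Msym]
  rw [Msym, if_neg hr.ne']
  calc ‖Λ ^ r + Λ⁻¹ ^ r‖ ≤ ‖Λ‖ ^ r + ‖Λ⁻¹‖ ^ r := by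
        simpa only [norm_pow] using norm_add_le (Λ ^ r) (Λ⁻¹ ^ r)
    _ ≤ (‖Λ‖ + ‖Λ⁻¹‖) ^ r := pow_add_pow_le (norm_nonneg _) (norm_nonneg _) hr.ne'
    _ ≤ (‖Λ‖ + ‖Λ⁻¹‖ + 1) ^ r := pow_le_pow_left₀ (by positivity) (by linarith) r

section PbarA1

variable (q : ℝ) (Λ : ℂ)

lemma PbarA1_eq_sum_range (n : ℕ) :
    PbarA1 q n Λ = ∑ j ∈ range (n / 2 + 1), qBinom (q : ℂ) n j * Msym (n - 2 * j) Λ := by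
  rw [range_eq_Ico, sum_eq_sum_Ico_succ_bot (by omega), Ico_add_one_right_eq_Icc,
    qBinom_zero_right, one_mul, Nat.mul_zero, Nat.sub_zero]
  rfl

lemma PbarA1_zero : PbarA1 q 0 Λ = 1 := by simp [PbarA1, Msym]

lemma PbarA1_one : PbarA1 q 1 Λ = Λ + Λ⁻¹ := by simp [PbarA1, Msym]

variable {q Λ}

lemma PbarA1_eq_pow_mul_rogersSzego (hq : ∀ k : ℕ, (q : ℂ) ^ (k + 1) ≠ 1) (hΛ : Λ ≠ 0) (n : ℕ) :
    PbarA1 q n Λ = Λ ^ n * rogersSzego (q : ℂ) n (Λ⁻¹ ^ 2) := by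
  rw [PbarA1_eq_sum_range, rogersSzego, mul_sum, sum_range_succ_eq_sum_range_div_two_succ
    (fun j => Λ ^ n * (qBinom (q : ℂ) n j * (Λ⁻¹ ^ 2) ^ j))]
  refine sum_congr rfl fun j hj => ?_
  have hj : 2 * j ≤ n := by have := mem_range.1 hj; omega
  simp only [← pow_mul, inv_pow]
  split_ifs with h
  · rw [← h, Nat.sub_self, Msym, if_pos rfl]
    field_simp
  · obtain ⟨m, rfl⟩ : ∃ m, n = m + 2 * j := ⟨n - 2 * j, by omega⟩
    rw [qBinom_symm hq (by omega), Nat.add_sub_cancel, Msym, if_neg (by omega),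
      show m + 2 * j - j = m + j by omega, inv_pow]
    field_simp
    ring

lemma PbarA1_succ_succ (hq : ∀ k : ℕ, (q : ℂ) ^ (k + 1) ≠ 1) (hΛ : Λ ≠ 0) (n : ℕ) :
    (Λ + Λ⁻¹) * PbarA1 q (n + 1) Λ
      = PbarA1 q (n + 2) Λ + (1 - (q : ℂ) ^ (n + 1)) * PbarA1 q n Λ := by
  simp only [PbarA1_eq_pow_mul_rogersSzego hq hΛ, rogersSzego_succ_succ hq]
  field_simp
  ring

lemma norm_PbarA1_le (hq0 : 0 < q) (hq1 : q < 1) (n : ℕ) :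
    ‖PbarA1 q n Λ‖ ≤ (2 * ((1 - q)⁻¹ * (‖Λ‖ + ‖Λ⁻¹‖ + 1))) ^ n := by
  set R := ‖Λ‖ + ‖Λ⁻¹‖ + 1
  have ha : 1 ≤ (1 - q)⁻¹ := one_le_inv₀ (by linarith) |>.2 (by linarith)
  have hR : 1 ≤ R := by simp only [R]; linarith [norm_nonneg Λ, norm_nonneg Λ⁻¹]
  have hcard : ((n / 2 + 1 : ℕ) : ℝ) ≤ 2 ^ n := by
    exact_mod_cast (show n / 2 + 1 ≤ n + 1 by omega).trans (Nat.lt_two_pow_self)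
  rw [PbarA1_eq_sum_range, mul_pow]
  calc ‖∑ j ∈ range (n / 2 + 1), qBinom (q : ℂ) n j * Msym (n - 2 * j) Λ‖
      ≤ ∑ j ∈ range (n / 2 + 1), ‖qBinom (q : ℂ) n j * Msym (n - 2 * j) Λ‖ := norm_sum_le _ _
    _ ≤ ∑ _j ∈ range (n / 2 + 1), ((1 - q)⁻¹ * R) ^ n := sum_le_sum fun j hj => by
        have hj : j ≤ n := by have := mem_range.1 hj; omega
        rw [norm_mul, mul_pow]
        exact mul_le_mul ((norm_qBinom_le hq0 hq1 n j).trans (pow_le_pow_right₀ ha hj))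
          ((norm_Msym_le _ Λ).trans (pow_le_pow_right₀ hR (Nat.sub_le n _)))
          (norm_nonneg _) (by positivity)
    _ ≤ 2 ^ n * ((1 - q)⁻¹ * R) ^ n := by
        rw [sum_const, card_range, nsmul_eq_mul]
        gcongr

end PbarA1

-- Real-valued, so that the rpow identities and the bounds below take place in `ℝ`.
def whitA1Coeff (q : ℝ) (n : ℕ) : ℝ := q ^ ((n : ℝ) ^ 2 / 4) / qPoch q n

def whitA1Term (q : ℝ) (X Λ : ℂ) (n : ℕ) : ℂ := whitA1Coeff q n * X ^ n * PbarA1 q n Λ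

lemma whitA1_eq_tsum (q : ℝ) (X Λ : ℂ) : whitA1 q X Λ = ∑' n, whitA1Term q X Λ n := by
  refine tsum_congr fun n => ?_
  rw [prod_Icc_one_sub_pow_eq_qPoch, whitA1Term, whitA1Coeff]
  push_cast [qPoch]
  ring

section WhitA1

variable {q : ℝ} (hq0 : 0 < q) (hq1 : q < 1)
include hq0 hq1

lemma norm_whitA1Term_le (X Λ : ℂ) (n : ℕ) :
    ‖whitA1Term q X Λ n‖
      ≤ ((1 - q)⁻¹ * ‖X‖ * (2 * ((1 - q)⁻¹ * (‖Λ‖ + ‖Λ⁻¹‖ + 1)))) ^ n * q ^ ((n : ℝ) ^ 2 / 4) := by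
  have hpow : 0 < (1 - q) ^ n := pow_pos (sub_pos.2 hq1) n
  have hcoeff : whitA1Coeff q n ≤ (1 - q)⁻¹ ^ n * q ^ ((n : ℝ) ^ 2 / 4) := by
    rw [whitA1Coeff, inv_pow, ← div_eq_inv_mul]
    exact div_le_div_of_nonneg_left (by positivity) hpow (one_sub_pow_mul_qPoch_le hq0 hq1 n)
  have hcoeff0 : 0 ≤ whitA1Coeff q n :=
    div_nonneg (by positivity) (hpow.trans_le (one_sub_pow_mul_qPoch_le hq0 hq1 n)).le
  rw [whitA1Term, norm_mul, norm_mul, norm_pow, Complex.norm_real, Real.norm_of_nonneg hcoeff0,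
    mul_pow, mul_pow]
  calc whitA1Coeff q n * ‖X‖ ^ n * ‖PbarA1 q n Λ‖
      ≤ (1 - q)⁻¹ ^ n * q ^ ((n : ℝ) ^ 2 / 4) * ‖X‖ ^ n
        * (2 * ((1 - q)⁻¹ * (‖Λ‖ + ‖Λ⁻¹‖ + 1))) ^ n := by
        gcongr
        exact norm_PbarA1_le hq0 hq1 n
    _ = _ := by ring

lemma hasSum_whitA1 (X Λ : ℂ) : HasSum (whitA1Term q X Λ) (whitA1 q X Λ) := by
  rw [whitA1_eq_tsum]
  exact (Summable.of_norm_bounded (summable_pow_mul_rpow_sq_div_four hq0.le hq1 _)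
    (norm_whitA1Term_le hq0 hq1 X Λ)).hasSum

lemma one_sub_pow_succ_mul_whitA1Coeff_succ (n : ℕ) :
    (1 - q ^ (n + 1)) * whitA1Coeff q (n + 1)
      = q ^ ((1 : ℝ) / 4) * (q ^ ((1 : ℝ) / 2)) ^ n * whitA1Coeff q n := by
  have hexp : q ^ ((1 : ℝ) / 4) * (q ^ ((1 : ℝ) / 2)) ^ n * q ^ ((n : ℝ) ^ 2 / 4)
      = q ^ (((n + 1 : ℕ) : ℝ) ^ 2 / 4) := by
    rw [rpow_mul_rpow_pow_mul_rpow hq0]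
    congr 1
    push_cast
    ring
  have hq := one_sub_pow_succ_ne_zero (pow_succ_ne_one_of_lt_one hq0 hq1) n
  rw [whitA1Coeff, whitA1Coeff, qPoch_succ, ← hexp]
  field_simp

lemma whitA1Coeff_eq_mul_whitA1Coeff_succ (n : ℕ) :
    whitA1Coeff q n = q ^ ((1 : ℝ) / 4)
      * ((q ^ (-(1 : ℝ) / 2)) ^ (n + 1) - (q ^ ((1 : ℝ) / 2)) ^ (n + 1))
      * whitA1Coeff q (n + 1) := by
  have hexp₁ : q ^ ((1 : ℝ) / 4) * (q ^ (-(1 : ℝ) / 2)) ^ (n + 1) * q ^ (((n + 1 : ℕ) : ℝ) ^ 2 / 4)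
      = q ^ ((n : ℝ) ^ 2 / 4) := by
    rw [rpow_mul_rpow_pow_mul_rpow hq0]
    congr 1
    push_cast
    ring
  have hexp₂ : q ^ ((1 : ℝ) / 4) * (q ^ ((1 : ℝ) / 2)) ^ (n + 1) * q ^ (((n + 1 : ℕ) : ℝ) ^ 2 / 4)
      = q ^ ((n : ℝ) ^ 2 / 4) * q ^ (n + 1) := by
    rw [rpow_mul_rpow_pow_mul_rpow hq0, ← Real.rpow_natCast q (n + 1), ← Real.rpow_add hq0]
    congr 1
    push_cast
    ring
  have hq := one_sub_pow_succ_ne_zero (pow_succ_ne_one_of_lt_one hq0 hq1) n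
  calc whitA1Coeff q n
      = (q ^ ((n : ℝ) ^ 2 / 4) - q ^ ((n : ℝ) ^ 2 / 4) * q ^ (n + 1))
        / (qPoch q n * (1 - q ^ (n + 1))) := by
        rw [whitA1Coeff, ← mul_one_sub, mul_div_mul_right _ _ hq]
    _ = _ := by rw [← hexp₂, ← hexp₁, whitA1Coeff, qPoch_succ]; ring

variable (X Λ : ℂ) (n : ℕ)

lemma rpow_mul_inv_mul_sub_whitA1Term (hX : X ≠ 0) :
    ((q ^ ((1 : ℝ) / 4) : ℝ) : ℂ) * X⁻¹
        * (whitA1Term q (((q ^ (-(1 : ℝ) / 2) : ℝ) : ℂ) * X) Λ (n + 1)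
          - whitA1Term q (((q ^ ((1 : ℝ) / 2) : ℝ) : ℂ) * X) Λ (n + 1))
      = whitA1Coeff q n * X ^ n * PbarA1 q (n + 1) Λ := by
  have hcoeff := congrArg ((↑) : ℝ → ℂ) (whitA1Coeff_eq_mul_whitA1Coeff_succ hq0 hq1 n)
  push_cast at hcoeff
  rw [hcoeff, whitA1Term, whitA1Term, mul_pow, mul_pow]
  field_simp
  ring

lemma rpow_mul_mul_whitA1Term :
    ((q ^ ((1 : ℝ) / 4) : ℝ) : ℂ) * X * whitA1Term q (((q ^ ((1 : ℝ) / 2) : ℝ) : ℂ) * X) Λ n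
      = (1 - (q : ℂ) ^ (n + 1)) * whitA1Coeff q (n + 1) * X ^ (n + 1) * PbarA1 q n Λ := by
  have hcoeff := congrArg ((↑) : ℝ → ℂ) (one_sub_pow_succ_mul_whitA1Coeff_succ hq0 hq1 n)
  push_cast at hcoeff
  rw [hcoeff, whitA1Term, mul_pow]
  ring

end WhitA1

/-- the q-Toda difference equation for the global q-Whittaker function. -/
theorem whitA1_qToda (q : ℝ) (hq0 : 0 < q) (hq1 : q < 1)
    (X Λ : ℂ) (hX : X ≠ 0) (hΛ : Λ ≠ 0) :
    ((q ^ ((1 : ℝ) / 4) : ℝ) : ℂ) *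
      (X * whitA1 q (((q ^ ((1 : ℝ) / 2) : ℝ) : ℂ) * X) Λ +
        X⁻¹ * (whitA1 q (((q ^ (-(1 : ℝ) / 2) : ℝ) : ℂ) * X) Λ -
               whitA1 q (((q ^ ((1 : ℝ) / 2) : ℝ) : ℂ) * X) Λ)) =
    (Λ + Λ⁻¹) * whitA1 q X Λ := by
  have hW := fun Y => hasSum_whitA1 hq0 hq1 Y Λ
  have hsum := hasSum_of_eq_shift_add (b := fun n => (Λ + Λ⁻¹) * whitA1Term q X Λ n)
    (((hW _).sub (hW _)).mul_left (((q ^ ((1 : ℝ) / 4) : ℝ) : ℂ) * X⁻¹))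
    ((hW _).mul_left (((q ^ ((1 : ℝ) / 4) : ℝ) : ℂ) * X))
    (by simp [whitA1Term])
    (by
      rw [rpow_mul_inv_mul_sub_whitA1Term hq0 hq1 X Λ 0 hX, whitA1Term, PbarA1_zero, PbarA1_one]
      ring)
    (fun n => by
      rw [rpow_mul_inv_mul_sub_whitA1Term hq0 hq1 X Λ (n + 1) hX, rpow_mul_mul_whitA1Term hq0 hq1,
        whitA1Term]
      linear_combination (whitA1Coeff q (n + 1) * X ^ (n + 1) : ℂ)
        * PbarA1_succ_succ (ofReal_pow_succ_ne_one_of_lt_one hq0 hq1) hΛ n)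
  rw [((hW X).mul_left (Λ + Λ⁻¹)).unique hsum]
  ring

end
end

section
/- Fix a real number q with 0 < q < 1. For all X, Λ ∈ ℂ with X ≠ 0 and Λ ≠ 0: lim_{m → ∞} Ψ̃(X q^{m/2}, Λ q^{m/2}) = ∑_{n=0}^∞ q^{n²/4} (X/Λ)ⁿ / ∏_{j=1}^n (1 − qʲ), i.e. in this extreme Whittaker limit the global q-Whittaker function degenerates to the quadratic q-exponential series in X/Λ. (Formula (4.84) of the paper in the rank-one case.) -/
open scoped BigOperators
open Filter

noncomputable section

/-!
Write the `n`-th term of `Ψ̃(X u, Λ u)` as `q^{n²/4} Xⁿ · uⁿ P̄_n(Λ u) / (q;q)_n`. Since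
`uⁿ M_r(Λ u) = Λ^r u^{n+r} + Λ^{-r} u^{n-r}` for `0 < r ≤ n`, as `u → 0` only the leading monomial
`M_n` survives and `uⁿ P̄_n(Λ u) → Λ⁻ⁿ`. For `|u| ≤ 1` the same identity, together with
`|1 - q^k| ≥ 1 - q`, bounds the `n`-th term by `q^{n²/4} Aⁿ` uniformly in `u`; the Gaussian factor
makes this summable, and dominated convergence along `u = q^{m/2}` gives the limit.
-/

open Topology

lemma pow_mul_Msym_mul {u : ℂ} (hu : u ≠ 0) (L : ℂ) {r n : ℕ} (hr : r ≤ n) (hr0 : r ≠ 0) :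
    u ^ n * Msym r (L * u) = L ^ r * u ^ (n + r) + L⁻¹ ^ r * u ^ (n - r) := by
  rw [Msym, if_neg hr0, mul_inv, mul_pow, mul_pow, inv_pow u, pow_sub₀ u hu hr, pow_add]
  ring

lemma tendsto_pow_mul_Msym_mul (L : ℂ) {r n : ℕ} (hr : r ≤ n) :
    Tendsto (fun u => u ^ n * Msym r (L * u)) (𝓝[≠] 0)
      (𝓝 (if r = n then L⁻¹ ^ n else 0)) := by
  rcases eq_or_ne r 0 with rfl | hr0
  · have h := ((continuous_pow n).tendsto (0 : ℂ)).mono_left (nhdsWithin_le_nhds (s := {0}ᶜ))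
    rcases eq_or_ne n 0 with rfl | hn
    · simp [Msym]
    · simpa [Msym, hn, Ne.symm hn] using h
  · have hcont : Continuous fun u : ℂ => L ^ r * u ^ (n + r) + L⁻¹ ^ r * u ^ (n - r) := by
      fun_prop
    have h := (hcont.tendsto 0).mono_left (nhdsWithin_le_nhds (s := {0}ᶜ))
    refine (h.congr' ?_).trans_eq ?_
    · filter_upwards [self_mem_nhdsWithin] with u hu
      exact (pow_mul_Msym_mul hu L hr hr0).symm
    · rcases hr.eq_or_lt with rfl | hlt
      · simp [hr0]
      · simp [hr0, hlt.ne, Nat.sub_eq_zero_iff_le, hlt.not_ge]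

lemma norm_pow_mul_Msym_mul_le {u : ℂ} (hu : u ≠ 0) (hu1 : ‖u‖ ≤ 1) (L : ℂ) {r n : ℕ}
    (hr : r ≤ n) : ‖u ^ n * Msym r (L * u)‖ ≤ (1 + ‖L‖ + ‖L⁻¹‖) ^ n := by
  have hB : 1 ≤ 1 + ‖L‖ + ‖L⁻¹‖ := by linarith [norm_nonneg L, norm_nonneg L⁻¹]
  have hpow : ∀ k, ‖u ^ k‖ ≤ 1 := fun k => by
    rw [norm_pow]; exact pow_le_one₀ (norm_nonneg u) hu1
  rcases eq_or_ne r 0 with rfl | hr0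
  · simpa [Msym] using (hpow n).trans (one_le_pow₀ hB)
  calc ‖u ^ n * Msym r (L * u)‖
      ≤ ‖L‖ ^ r * ‖u ^ (n + r)‖ + ‖L⁻¹‖ ^ r * ‖u ^ (n - r)‖ := by
        rw [pow_mul_Msym_mul hu L hr hr0, ← norm_pow, ← norm_pow, ← norm_mul, ← norm_mul]
        exact norm_add_le _ _
    _ ≤ ‖L‖ ^ r + ‖L⁻¹‖ ^ r := by
        gcongr
        · exact mul_le_of_le_one_right (by positivity) (hpow _)
        · exact mul_le_of_le_one_right (by positivity) (hpow _)
    _ ≤ (‖L‖ + ‖L⁻¹‖) ^ r := pow_add_pow_le (norm_nonneg _) (norm_nonneg _) hr0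
    _ ≤ (1 + ‖L‖ + ‖L⁻¹‖) ^ n :=
        (pow_le_pow_left₀ (by positivity) (by linarith) r).trans (pow_le_pow_right₀ hB hr)

def hermiteCoeff (q : ℝ) (n j : ℕ) : ℂ :=
  ∏ i ∈ Finset.range j, (1 - (q : ℂ) ^ (n - i)) / (1 - (q : ℂ) ^ (i + 1))

lemma norm_one_sub_ofReal_pow {q : ℝ} (hq0 : 0 ≤ q) (hq1 : q ≤ 1) (k : ℕ) :
    ‖1 - (q : ℂ) ^ k‖ = 1 - q ^ k := by
  rw [← Complex.ofReal_pow, ← Complex.ofReal_one, ← Complex.ofReal_sub, Complex.norm_real,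
    Real.norm_of_nonneg (sub_nonneg.2 (pow_le_one₀ hq0 hq1))]

lemma one_sub_le_norm_one_sub_ofReal_pow {q : ℝ} (hq0 : 0 ≤ q) (hq1 : q ≤ 1) {k : ℕ}
    (hk : k ≠ 0) : 1 - q ≤ ‖1 - (q : ℂ) ^ k‖ := by
  rw [norm_one_sub_ofReal_pow hq0 hq1]
  exact sub_le_sub_left (pow_le_of_le_one hq0 hq1 hk) 1

lemma norm_hermiteCoeff_le {q : ℝ} (hq0 : 0 ≤ q) (hq1 : q < 1) (n j : ℕ) :
    ‖hermiteCoeff q n j‖ ≤ (1 - q)⁻¹ ^ j := by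
  have hq : 0 < 1 - q := sub_pos.2 hq1
  calc ‖hermiteCoeff q n j‖
      ≤ ∏ i ∈ Finset.range j, ‖(1 - (q : ℂ) ^ (n - i)) / (1 - (q : ℂ) ^ (i + 1))‖ :=
        Finset.norm_prod_le _ _
    _ ≤ ∏ _i ∈ Finset.range j, (1 - q)⁻¹ :=
        Finset.prod_le_prod (fun _ _ => norm_nonneg _) fun i _ => ?_
    _ = (1 - q)⁻¹ ^ j := by rw [Finset.prod_const, Finset.card_range]
  rw [norm_div, div_eq_mul_inv]
  have hnum : ‖1 - (q : ℂ) ^ (n - i)‖ ≤ 1 := by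
    rw [norm_one_sub_ofReal_pow hq0 hq1.le]
    linarith [pow_nonneg hq0 (n - i)]
  exact (mul_le_of_le_one_left (by positivity) hnum).trans
    (inv_anti₀ hq (one_sub_le_norm_one_sub_ofReal_pow hq0 hq1.le i.succ_ne_zero))

lemma pow_mul_PbarA1_mul (q : ℝ) (n : ℕ) (u L : ℂ) :
    u ^ n * PbarA1 q n (L * u) = u ^ n * Msym n (L * u) +
      ∑ j ∈ Finset.Icc 1 (n / 2), hermiteCoeff q n j * (u ^ n * Msym (n - 2 * j) (L * u)) := by
  rw [PbarA1, mul_add, Finset.mul_sum]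
  congr 1
  refine Finset.sum_congr rfl fun j _ => ?_
  rw [hermiteCoeff]
  ring

lemma tendsto_pow_mul_PbarA1_mul (q : ℝ) (n : ℕ) (L : ℂ) :
    Tendsto (fun u => u ^ n * PbarA1 q n (L * u)) (𝓝[≠] 0) (𝓝 (L⁻¹ ^ n)) := by
  simp_rw [pow_mul_PbarA1_mul]
  have hlead := tendsto_pow_mul_Msym_mul L (le_refl n)
  have hrest := tendsto_finsetSum (Finset.Icc 1 (n / 2)) fun j _ =>
    (tendsto_pow_mul_Msym_mul L (Nat.sub_le n (2 * j))).const_mul (hermiteCoeff q n j)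
  have hlower : ∀ j ∈ Finset.Icc 1 (n / 2), n - 2 * j ≠ n := fun j hj => by
    rw [Finset.mem_Icc] at hj; omega
  simpa [Finset.sum_ite_of_false hlower] using hlead.add hrest

lemma norm_pow_mul_PbarA1_mul_le {q : ℝ} (hq0 : 0 ≤ q) (hq1 : q < 1) (n : ℕ) {u : ℂ}
    (hu : u ≠ 0) (hu1 : ‖u‖ ≤ 1) (L : ℂ) :
    ‖u ^ n * PbarA1 q n (L * u)‖ ≤ (2 * (1 + ‖L‖ + ‖L⁻¹‖) / (1 - q)) ^ n := by
  set B := 1 + ‖L‖ + ‖L⁻¹‖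
  have hq : 0 < 1 - q := sub_pos.2 hq1
  have hcoeff : ∀ j ≤ n, ‖hermiteCoeff q n j‖ ≤ (1 - q)⁻¹ ^ n := fun j hj =>
    (norm_hermiteCoeff_le hq0 hq1 n j).trans
      (pow_le_pow_right₀ (one_le_inv₀ hq |>.2 (by linarith)) hj)
  have hterm : ∀ j ≤ n, ‖hermiteCoeff q n j * (u ^ n * Msym (n - 2 * j) (L * u))‖
      ≤ ((1 - q)⁻¹ * B) ^ n := fun j hj => by
    rw [norm_mul, mul_pow]
    exact mul_le_mul (hcoeff j hj) (norm_pow_mul_Msym_mul_le hu hu1 L (Nat.sub_le _ _))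
      (norm_nonneg _) (by positivity)
  have hlead : ‖u ^ n * Msym n (L * u)‖ ≤ ((1 - q)⁻¹ * B) ^ n := by
    simpa [hermiteCoeff] using hterm 0 (Nat.zero_le n)
  have hcard : ((n / 2 + 1 : ℕ) : ℝ) ≤ 2 ^ n := by
    exact_mod_cast (Nat.succ_le_of_lt (Nat.div_le_self n 2 |>.trans_lt Nat.lt_two_pow_self))
  rw [pow_mul_PbarA1_mul]
  calc _ ≤ ((1 - q)⁻¹ * B) ^ n + ∑ j ∈ Finset.Icc 1 (n / 2), ((1 - q)⁻¹ * B) ^ n :=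
        (norm_add_le _ _).trans <| add_le_add hlead <| (norm_sum_le _ _).trans <|
          Finset.sum_le_sum fun j hj => hterm j (by rw [Finset.mem_Icc] at hj; omega)
    _ = ((n / 2 + 1 : ℕ) : ℝ) * ((1 - q)⁻¹ * B) ^ n := by
        rw [Finset.sum_const, Nat.card_Icc, nsmul_eq_mul]; push_cast; ring
    _ ≤ 2 ^ n * ((1 - q)⁻¹ * B) ^ n := by gcongr
    _ = (2 * B / (1 - q)) ^ n := by rw [← mul_pow]; ring

lemma pow_le_norm_prod_one_sub_pow {q : ℝ} (hq0 : 0 ≤ q) (hq1 : q ≤ 1) (n : ℕ) :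
    (1 - q) ^ n ≤ ‖∏ j ∈ Finset.Icc 1 n, (1 - (q : ℂ) ^ j)‖ := by
  calc (1 - q) ^ n = ∏ _j ∈ Finset.Icc 1 n, (1 - q) := by simp
    _ ≤ ∏ j ∈ Finset.Icc 1 n, ‖1 - (q : ℂ) ^ j‖ :=
        Finset.prod_le_prod (fun _ _ => sub_nonneg.2 hq1) fun j hj =>
          one_sub_le_norm_one_sub_ofReal_pow hq0 hq1 (by rw [Finset.mem_Icc] at hj; omega)
    _ = _ := (norm_prod _ _).symm

-- `q^{n²/4} A^n = (q^{n/4} A)^n` with `q^{n/4} A → 0`.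
lemma summable_rpow_sq_div_four_mul_pow {q : ℝ} (hq0 : 0 < q) (hq1 : q < 1) (A : ℝ) :
    Summable fun n : ℕ => q ^ ((n : ℝ) ^ 2 / 4) * A ^ n := by
  have hbase : Tendsto (fun n : ℕ => q ^ ((n : ℝ) / 4) * A) atTop (𝓝 0) := by
    have h := (tendsto_rpow_atTop_of_base_lt_one q (by linarith) hq1).comp
      ((tendsto_natCast_atTop_atTop (R := ℝ)).atTop_div_const (by norm_num : (0 : ℝ) < 4))
    simpa using h.mul_const A
  have hsmall : ∀ᶠ n : ℕ in atTop, ‖q ^ ((n : ℝ) / 4) * A‖ ≤ 1 / 2 :=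
    hbase.norm.eventually (ge_mem_nhds (by norm_num : ‖(0 : ℝ)‖ < 1 / 2))
  refine Summable.of_norm_bounded_eventually summable_geometric_two ?_
  rw [Nat.cofinite_eq_atTop]
  filter_upwards [hsmall] with n hn
  have hsplit : q ^ ((n : ℝ) ^ 2 / 4) * A ^ n = (q ^ ((n : ℝ) / 4) * A) ^ n := by
    rw [mul_pow, ← Real.rpow_mul_natCast hq0.le]
    ring_nf
  rw [hsplit, norm_pow]
  exact pow_le_pow_left₀ (norm_nonneg _) hn n

lemma tendsto_whitA1_mul_of_tendsto_zero {q : ℝ} (hq0 : 0 < q) (hq1 : q < 1) (X Λ : ℂ)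
    {α : Type*} {l : Filter α} {u : α → ℂ} (hu : Tendsto u l (𝓝[≠] 0)) :
    Tendsto (fun a => whitA1 q (X * u a) (Λ * u a)) l
      (𝓝 (∑' n : ℕ, ((q ^ ((n : ℝ) ^ 2 / 4) : ℝ) : ℂ) * (X / Λ) ^ n /
        ∏ j ∈ Finset.Icc 1 n, (1 - (q : ℂ) ^ j))) := by
  have hterm : ∀ (n : ℕ) (v : ℂ), ((q ^ ((n : ℝ) ^ 2 / 4) : ℝ) : ℂ) * (X * v) ^ n *
      PbarA1 q n (Λ * v) / ∏ j ∈ Finset.Icc 1 n, (1 - (q : ℂ) ^ j) =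
      ((q ^ ((n : ℝ) ^ 2 / 4) : ℝ) : ℂ) * X ^ n * (v ^ n * PbarA1 q n (Λ * v)) /
        ∏ j ∈ Finset.Icc 1 n, (1 - (q : ℂ) ^ j) := fun n v => by ring
  simp only [whitA1, hterm]
  set C := 2 * (1 + ‖Λ‖ + ‖Λ⁻¹‖) / (1 - q)
  have hP : ∀ n v, v ≠ 0 → ‖v‖ ≤ 1 → ‖v ^ n * PbarA1 q n (Λ * v)‖ ≤ C ^ n :=
    fun n _ hv hv1 => norm_pow_mul_PbarA1_mul_le hq0.le hq1 n hv hv1 Λ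
  have hC : 0 ≤ C := by positivity
  clear_value C
  refine tendsto_tsum_of_dominated_convergence
    (summable_rpow_sq_div_four_mul_pow hq0 hq1 (‖X‖ * C / (1 - q))) (fun n => ?_) ?_
  · rw [div_eq_mul_inv X, mul_pow]
    have h := ((tendsto_pow_mul_PbarA1_mul q n Λ).comp hu).const_mul
      (((q ^ ((n : ℝ) ^ 2 / 4) : ℝ) : ℂ) * X ^ n)
    simpa [mul_assoc] using h.div_const (∏ j ∈ Finset.Icc 1 n, (1 - (q : ℂ) ^ j))
  · have hne : ∀ᶠ a in l, u a ≠ 0 := (tendsto_nhdsWithin_iff.1 hu).2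
    have hle : ∀ᶠ a in l, ‖u a‖ ≤ 1 := (tendsto_nhdsWithin_iff.1 hu).1.norm.eventually
      (ge_mem_nhds (by simp))
    filter_upwards [hne, hle] with a hne hle n
    have hq : 0 < 1 - q := sub_pos.2 hq1
    rw [norm_div, norm_mul, norm_mul, norm_pow, Complex.norm_real,
      Real.norm_of_nonneg (Real.rpow_nonneg hq0.le _)]
    refine div_le_of_le_mul₀ (norm_nonneg _) (by positivity) ?_
    calc q ^ ((n : ℝ) ^ 2 / 4) * ‖X‖ ^ n * ‖u a ^ n * PbarA1 q n (Λ * u a)‖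
        ≤ q ^ ((n : ℝ) ^ 2 / 4) * ‖X‖ ^ n * C ^ n := by
          gcongr; exact hP n _ hne hle
      _ = q ^ ((n : ℝ) ^ 2 / 4) * (‖X‖ * C / (1 - q)) ^ n * (1 - q) ^ n := by
          rw [mul_assoc _ ((_ / _) ^ n), ← mul_pow, div_mul_cancel₀ _ hq.ne', mul_pow, mul_assoc]
      _ ≤ q ^ ((n : ℝ) ^ 2 / 4) * (‖X‖ * C / (1 - q)) ^ n *
            ‖∏ j ∈ Finset.Icc 1 n, (1 - (q : ℂ) ^ j)‖ := by
          gcongr; exact pow_le_norm_prod_one_sub_pow hq0.le hq1.le n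

theorem whitA1_extreme_limit_general (q : ℝ) (hq0 : 0 < q) (hq1 : q < 1)
    (X Λ : ℂ) :
    Filter.Tendsto (fun m : ℕ =>
        whitA1 q (X * ((q ^ ((m : ℝ) / 2) : ℝ) : ℂ)) (Λ * ((q ^ ((m : ℝ) / 2) : ℝ) : ℂ)))
      Filter.atTop
      (nhds (∑' n : ℕ, ((q ^ ((n : ℝ) ^ 2 / 4) : ℝ) : ℂ) * (X / Λ) ^ n /
        ∏ j ∈ Finset.Icc 1 n, (1 - (q : ℂ) ^ j))) := by
  refine tendsto_whitA1_mul_of_tendsto_zero hq0 hq1 X Λ (tendsto_nhdsWithin_iff.2 ⟨?_, ?_⟩)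
  · have h := (tendsto_rpow_atTop_of_base_lt_one q (by linarith) hq1).comp
      ((tendsto_natCast_atTop_atTop (R := ℝ)).atTop_div_const (by norm_num : (0 : ℝ) < 2))
    have h' := (Complex.continuous_ofReal.tendsto 0).comp h
    rwa [Complex.ofReal_zero] at h'
  · exact Eventually.of_forall fun m => by
      simpa using (Real.rpow_pos_of_pos hq0 ((m : ℝ) / 2)).ne'

/-- in the extreme Whittaker limit, the global q-Whittaker function
degenerates to the quadratic q-exponential series in X/Λ. -/
theorem whitA1_extreme_limit (q : ℝ) (hq0 : 0 < q) (hq1 : q < 1)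
    (X Λ : ℂ) (hX : X ≠ 0) (hΛ : Λ ≠ 0) :
    Filter.Tendsto (fun m : ℕ =>
        whitA1 q (X * ((q ^ ((m : ℝ) / 2) : ℝ) : ℂ)) (Λ * ((q ^ ((m : ℝ) / 2) : ℝ) : ℂ)))
      Filter.atTop
      (nhds (∑' n : ℕ, ((q ^ ((n : ℝ) ^ 2 / 4) : ℝ) : ℂ) * (X / Λ) ^ n /
        ∏ j ∈ Finset.Icc 1 n, (1 - (q : ℂ) ^ j))) :=
  whitA1_extreme_limit_general q hq0 hq1 X Λ

end
end
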